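/- Let t ≥ 1 be an integer and set V = [4t], partitioned into blocks V_i = {a_i, b_i, c_i, d_i} with a_i = 4i−3, b_i = 4i−2, c_i = 4i−1, d_i = 4i for i ∈ [t]. Let the left vertex set S be the 2-element subsets of V, the right vertex set T = V, let E1 = {(e,v) : e ∈ S, v ∈ e} be the incidence graph of K_{4t}, and let E2 consist of the 2t 2-edges ({a_i,b_i}, c_i; {a_i,c_i}, d_i) and ({b_i,d_i}, a_i; {c_i,d_i}, b_i) for i ∈ [t]. Then (E1,E2) satisfies the simplicity condition and contains no generalized C4-cycle. -/

import Mathlib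

open Finset

/-- A bipartite graph on `α × β` (a set of cells, called 1-edges) is `C₄`-free if no two
distinct rows share two distinct columns. -/
def C4Free {α β : Type*} (E1 : Finset (α × β)) : Prop :=
  ∀ i k : α, ∀ j l : β, i ≠ k → j ≠ l →
    (i, j) ∈ E1 → (i, l) ∈ E1 → (k, j) ∈ E1 → (k, l) ∈ E1 → False

/-- A 2-edge `(i,j;k,l)`: a pair of cells, its two halves `(i,j)` and `(k,l)`. -/
abbrev TwoEdge (α β : Type*) := (α × β) × (α × β)

/-- A 2-edge `(i,j;k,l)` is nondegenerate if `i ≠ k` and `j ≠ l`. -/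
def Nondeg {α β : Type*} (e : TwoEdge α β) : Prop :=
  e.1.1 ≠ e.2.1 ∧ e.1.2 ≠ e.2.2

/-- The simplicity condition: the halves of the 2-edges in `E2` are pairwise distinct
cells, none of which lies in `E1`. -/
def Simple {α β : Type*} (E1 : Finset (α × β)) (E2 : Finset (TwoEdge α β)) : Prop :=
  (∀ e ∈ E2, e.1 ≠ e.2) ∧
  (∀ e ∈ E2, e.1 ∉ E1 ∧ e.2 ∉ E1) ∧
  (∀ e ∈ E2, ∀ f ∈ E2, e ≠ f →
    e.1 ≠ f.1 ∧ e.1 ≠ f.2 ∧ e.2 ≠ f.1 ∧ e.2 ≠ f.2)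

/-- A cell is occupied if it lies in `E1` or is a half of some 2-edge in `E2`. -/
def Occupied {α β : Type*} (E1 : Finset (α × β)) (E2 : Finset (TwoEdge α β))
    (c : α × β) : Prop :=
  c ∈ E1 ∨ ∃ e ∈ E2, e.1 = c ∨ e.2 = c

/-- `(E1, E2)` contains a generalized `C₄`-cycle:
(1) a classical `C₄` among 1-edges; or
(2) a nondegenerate 2-edge `(i,j;k,l) ∈ E2` with both opposite cells `(i,l)`, `(k,j)` occupied; or
(3) a 2-edge `(i,j;p,q) ∈ E2` and a cell `(k,l)` with `k ∉ {i,p}`, `l ∉ {j,q}` such that the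
five cells `(k,l), (k,j), (k,q), (i,l), (p,l)` are all occupied, these five cells being
pairwise distinct in case the 2-edge is nondegenerate. -/
def HasGenC4 {α β : Type*} (E1 : Finset (α × β)) (E2 : Finset (TwoEdge α β)) : Prop :=
  (∃ i k : α, ∃ j l : β, i ≠ k ∧ j ≠ l ∧
      (i, j) ∈ E1 ∧ (i, l) ∈ E1 ∧ (k, j) ∈ E1 ∧ (k, l) ∈ E1) ∨
  (∃ e ∈ E2, Nondeg e ∧
      Occupied E1 E2 (e.1.1, e.2.2) ∧ Occupied E1 E2 (e.2.1, e.1.2)) ∨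
  (∃ e ∈ E2, ∃ k : α, ∃ l : β,
      k ≠ e.1.1 ∧ k ≠ e.2.1 ∧ l ≠ e.1.2 ∧ l ≠ e.2.2 ∧
      Occupied E1 E2 (k, l) ∧ Occupied E1 E2 (k, e.1.2) ∧ Occupied E1 E2 (k, e.2.2) ∧
      Occupied E1 E2 (e.1.1, l) ∧ Occupied E1 E2 (e.2.1, l) ∧
      (Nondeg e →
        [(k, l), (k, e.1.2), (k, e.2.2), (e.1.1, l), (e.2.1, l)].Pairwise (· ≠ ·)))

/-- The Zarankiewicz number `z(m,n)`: the maximum number of cells of a `C₄`-free bipartite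
graph on `[m] × [n]`. -/
noncomputable def zar (m n : ℕ) : ℕ :=
  sSup {k | ∃ E1 : Finset (Fin m × Fin n), C4Free E1 ∧ E1.card = k}

/-- An admissible limited augmented bipartite graph on `[m] × [n]`: `E1` is `C₄`-free with
`|E1| = z(m,n)`, the simplicity condition holds, and there is no generalized `C₄`-cycle. -/
def Admissible {m n : ℕ} (E1 : Finset (Fin m × Fin n))
    (E2 : Finset (TwoEdge (Fin m) (Fin n))) : Prop :=
  C4Free E1 ∧ E1.card = zar m n ∧ Simple E1 E2 ∧ ¬ HasGenC4 E1 E2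

/-- The limited augmented Zarankiewicz number `z_L(m,n)`: the maximum of `|E1| + |E2|`
over all admissible limited augmented bipartite graphs on `[m] × [n]`. -/
noncomputable def zL (m n : ℕ) : ℕ :=
  sSup {k | ∃ (E1 : Finset (Fin m × Fin n)) (E2 : Finset (TwoEdge (Fin m) (Fin n))),
    Admissible E1 E2 ∧ E1.card + E2.card = k}

/-- The left vertex set for the `K_{4t}` incidence graph: 2-element subsets of `[4t]`. -/
abbrev KEdges (t : ℕ) := {e : Finset (Fin (4 * t)) // e.card = 2}

/-- The incidence bipartite graph of `K_{4t}`. -/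
def IncK (t : ℕ) : Finset (KEdges t × Fin (4 * t)) :=
  Finset.univ.filter fun p => p.2 ∈ p.1.val

/-- The 2-element subset `{a, b}` as a left vertex. -/
def pr {t : ℕ} (a b : Fin (4 * t)) (h : a ≠ b) : KEdges t :=
  ⟨{a, b}, Finset.card_pair h⟩

/-- The vertex `a_i = 4i − 3` of block `V_i` (0-indexed: `4i`). -/
def va {t : ℕ} (i : Fin t) : Fin (4 * t) := ⟨4 * i.val, by have := i.isLt; omega⟩
/-- The vertex `b_i = 4i − 2` of block `V_i` (0-indexed: `4i + 1`). -/
def vb {t : ℕ} (i : Fin t) : Fin (4 * t) := ⟨4 * i.val + 1, by have := i.isLt; omega⟩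
/-- The vertex `c_i = 4i − 1` of block `V_i` (0-indexed: `4i + 2`). -/
def vc {t : ℕ} (i : Fin t) : Fin (4 * t) := ⟨4 * i.val + 2, by have := i.isLt; omega⟩
/-- The vertex `d_i = 4i` of block `V_i` (0-indexed: `4i + 3`). -/
def vd {t : ℕ} (i : Fin t) : Fin (4 * t) := ⟨4 * i.val + 3, by have := i.isLt; omega⟩

/-- The 2-edge `({a_i,b_i}, c_i; {a_i,c_i}, d_i)`. -/
def wedge1 {t : ℕ} (i : Fin t) : TwoEdge (KEdges t) (Fin (4 * t)) :=
  ((pr (va i) (vb i) (Fin.ne_of_val_ne (by simp [va, vb])), vc i),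
   (pr (va i) (vc i) (Fin.ne_of_val_ne (by simp [va, vc])), vd i))

/-- The 2-edge `({b_i,d_i}, a_i; {c_i,d_i}, b_i)`. -/
def wedge2 {t : ℕ} (i : Fin t) : TwoEdge (KEdges t) (Fin (4 * t)) :=
  ((pr (vb i) (vd i) (Fin.ne_of_val_ne (by simp [vb, vd])), va i),
   (pr (vc i) (vd i) (Fin.ne_of_val_ne (by simp [vc, vd])), vb i))

/-- The set of the `2t` within-block 2-edges. -/
def E2K (t : ℕ) : Finset (TwoEdge (KEdges t) (Fin (4 * t))) :=
  Finset.univ.biUnion fun i : Fin t => {wedge1 i, wedge2 i}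

/-! Every half of a 2-edge of `E2K t` is a cell `(π v, v)`, where `π = partner` sends the
vertices `a, b, c, d` of a block to the pairs `{b,d}, {c,d}, {a,b}, {a,c}` of the same block.
Hence a cell `(e, v)` is occupied only if `v ∈ e` or `e = π v`. Two distinct pairs share at most
one vertex, so there is no `C₄` among 1-edges. Since `π` is injective, a generalized `C₄` through
the 2-edge `(π x, x; π y, y)` forces `y ∈ π x` and `x ∈ π y` (clause (2)), or a vertex `l` with
`l ∈ π x ∩ π y` and `{x, y} = π l` (clause (3): the row `k` of the configuration must be
`{x, y}`, and `(k, l)` is occupied with `l ∉ k`). Both are ruled out for `(x, y) = (c, d)` and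
`(a, b)` by a check inside a single block of four vertices. -/

lemma Finset.eq_pair_of_card_eq_two {α : Type*} [DecidableEq α] {s : Finset α} (hs : s.card = 2)
    {x y : α} (hxy : x ≠ y) (hx : x ∈ s) (hy : y ∈ s) : s = {x, y} :=
  (Finset.eq_of_subset_of_card_le (Finset.insert_subset hx (Finset.singleton_subset_iff.2 hy))
    (by rw [hs, Finset.card_pair hxy])).symm

/-- For `R u w := w ∈ π u`, clauses (2) and (3) of `HasGenC4` for the 2-edge `(π x, x; π y, y)`
reduce to the last two conditions. -/
def GenC4FreePair {α : Type*} (R : α → α → Prop) (x y : α) : Prop :=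
  x ≠ y ∧ ¬(R x y ∧ R y x) ∧ ∀ l, ¬(R x l ∧ R y l ∧ R l x ∧ R l y)

section GraphOfPartner

variable {V : Type*} [Fintype V] [DecidableEq V]

variable (V) in
def incidence : Finset ({e : Finset V // e.card = 2} × V) :=
  univ.filter fun p => p.2 ∈ p.1.val

@[simp] lemma mem_incidence {e : {e : Finset V // e.card = 2}} {v : V} :
    (e, v) ∈ incidence V ↔ v ∈ e.val := by
  simp [incidence]

lemma c4Free_incidence : C4Free (incidence V) := by
  intro e f x y hef hxy hex hey hfx hfy
  simp only [mem_incidence] at hex hey hfx hfy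
  exact hef (Subtype.ext ((Finset.eq_pair_of_card_eq_two e.2 hxy hex hey).trans
    (Finset.eq_pair_of_card_eq_two f.2 hxy hfx hfy).symm))

variable (π : V → {e : Finset V // e.card = 2})

def graphTwoEdge (x y : V) : TwoEdge {e : Finset V // e.card = 2} V :=
  ((π x, x), (π y, y))

variable {π} {E2 : Finset (TwoEdge {e : Finset V // e.card = 2} V)}

lemma mem_or_eq_of_occupied (hE2 : ∀ f ∈ E2, ∃ x y, f = graphTwoEdge π x y)
    {e : {e : Finset V // e.card = 2}} {v : V} (h : Occupied (incidence V) E2 (e, v)) :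
    v ∈ e.val ∨ e = π v := by
  rcases h with h | ⟨f, hf, hc⟩
  · exact Or.inl (mem_incidence.1 h)
  · obtain ⟨x, y, rfl⟩ := hE2 f hf
    right
    rcases hc with hc | hc <;> obtain ⟨rfl, rfl⟩ := Prod.mk.inj hc <;> rfl

lemma mem_partners_of_occupied_opposite (hE2 : ∀ f ∈ E2, ∃ x y, f = graphTwoEdge π x y)
    {x y : V} (hxy : π x ≠ π y) (hx : Occupied (incidence V) E2 (π x, y))
    (hy : Occupied (incidence V) E2 (π y, x)) : y ∈ (π x).val ∧ x ∈ (π y).val :=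
  ⟨(mem_or_eq_of_occupied hE2 hx).resolve_right hxy,
    (mem_or_eq_of_occupied hE2 hy).resolve_right hxy.symm⟩

lemma mutual_partners_of_five_cells (hE2 : ∀ f ∈ E2, ∃ x y, f = graphTwoEdge π x y)
    (hπ : Function.Injective π) {x y l : V} {k : {e : Finset V // e.card = 2}} (hxy : x ≠ y)
    (hkx : k ≠ π x) (hky : k ≠ π y) (hlx : l ≠ x) (hly : l ≠ y)
    (hkl : Occupied (incidence V) E2 (k, l)) (hkx' : Occupied (incidence V) E2 (k, x))
    (hky' : Occupied (incidence V) E2 (k, y)) (hxl : Occupied (incidence V) E2 (π x, l))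
    (hyl : Occupied (incidence V) E2 (π y, l)) :
    l ∈ (π x).val ∧ l ∈ (π y).val ∧ x ∈ (π l).val ∧ y ∈ (π l).val := by
  have hk : k.val = {x, y} := Finset.eq_pair_of_card_eq_two k.2 hxy
    ((mem_or_eq_of_occupied hE2 hkx').resolve_right hkx)
    ((mem_or_eq_of_occupied hE2 hky').resolve_right hky)
  have hl : k = π l := (mem_or_eq_of_occupied hE2 hkl).resolve_left (by simp [hk, hlx, hly])
  refine ⟨(mem_or_eq_of_occupied hE2 hxl).resolve_right fun h => hlx (hπ h).symm,
    (mem_or_eq_of_occupied hE2 hyl).resolve_right fun h => hly (hπ h).symm, ?_, ?_⟩ <;>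
    simp [← hl, hk]

lemma simple_incidence (hπ : ∀ v, v ∉ (π v).val)
    (hE2 : ∀ f ∈ E2, ∃ x y, f = graphTwoEdge π x y ∧ x ≠ y)
    (hcols : ∀ f ∈ E2, ∀ g ∈ E2, f ≠ g →
      f.1.2 ≠ g.1.2 ∧ f.1.2 ≠ g.2.2 ∧ f.2.2 ≠ g.1.2 ∧ f.2.2 ≠ g.2.2) :
    Simple (incidence V) E2 := by
  refine ⟨fun f hf => ?_, fun f hf => ?_, fun f hf g hg hfg => ?_⟩
  · obtain ⟨x, y, rfl, hxy⟩ := hE2 f hf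
    exact ne_of_apply_ne Prod.snd hxy
  · obtain ⟨x, y, rfl, -⟩ := hE2 f hf
    simp [graphTwoEdge, hπ]
  · obtain ⟨h1, h2, h3, h4⟩ := hcols f hf g hg hfg
    exact ⟨ne_of_apply_ne Prod.snd h1, ne_of_apply_ne Prod.snd h2, ne_of_apply_ne Prod.snd h3,
      ne_of_apply_ne Prod.snd h4⟩

theorem not_hasGenC4_incidence (hπ : Function.Injective π)
    (hE2 : ∀ f ∈ E2, ∃ x y, f = graphTwoEdge π x y ∧
      GenC4FreePair (fun u w => w ∈ (π u).val) x y) :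
    ¬ HasGenC4 (incidence V) E2 := by
  have hgraph : ∀ f ∈ E2, ∃ x y, f = graphTwoEdge π x y := fun f hf =>
    (hE2 f hf).imp fun _ ⟨y, h⟩ => ⟨y, h.1⟩
  rintro (⟨e, f, x, y, hef, hxy, hex, hey, hfx, hfy⟩ | ⟨f, hf, hnd, hx, hy⟩ |
    ⟨f, hf, k, l, hkx, hky, hlx, hly, hkl, hkx', hky', hxl, hyl, -⟩)
  · exact c4Free_incidence e f x y hef hxy hex hey hfx hfy
  · obtain ⟨x, y, rfl, -, hopp, -⟩ := hE2 f hf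
    exact hopp (mem_partners_of_occupied_opposite hgraph hnd.1 hx hy)
  · obtain ⟨x, y, rfl, hxy, -, hfive⟩ := hE2 f hf
    exact hfive l (mutual_partners_of_five_cells hgraph hπ hxy hkx hky hlx hly hkl hkx' hky'
      hxl hyl)

end GraphOfPartner

def localPartner : Fin 4 → Finset (Fin 4) := ![{1, 3}, {2, 3}, {0, 1}, {0, 2}]

lemma localPartner_injective : Function.Injective localPartner := by decide

lemma card_localPartner : ∀ r, (localPartner r).card = 2 := by decide

lemma not_mem_localPartner : ∀ r, r ∉ localPartner r := by decide

section Blocks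

variable {t : ℕ}

variable (t) in
def blockPos : Fin t × Fin 4 ≃ Fin (4 * t) :=
  finProdFinEquiv.trans (finCongr (Nat.mul_comm t 4))

@[simp] lemma blockPos_val (i : Fin t) (r : Fin 4) : (blockPos t (i, r)).val = 4 * i + r := by
  simp [blockPos, Nat.add_comm]

lemma va_eq (i : Fin t) : va i = blockPos t (i, 0) := Fin.ext (by simp [va])
lemma vb_eq (i : Fin t) : vb i = blockPos t (i, 1) := Fin.ext (by simp [vb])
lemma vc_eq (i : Fin t) : vc i = blockPos t (i, 2) := Fin.ext (by simp [vc])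
lemma vd_eq (i : Fin t) : vd i = blockPos t (i, 3) := Fin.ext (by simp [vd])

def partner (v : Fin (4 * t)) : KEdges t :=
  ⟨({((blockPos t).symm v).1} ×ˢ localPartner ((blockPos t).symm v).2).map (blockPos t).toEmbedding,
    by simp [card_localPartner]⟩

@[simp] lemma mem_partner {i j : Fin t} {r s : Fin 4} :
    blockPos t (j, s) ∈ (partner (blockPos t (i, r))).val ↔ j = i ∧ s ∈ localPartner r := by
  simp [partner, and_comm, eq_comm]

lemma partner_injective : Function.Injective (partner (t := t)) := by
  intro v w h
  obtain ⟨⟨i, r⟩, rfl⟩ := (blockPos t).surjective v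
  obtain ⟨⟨j, s⟩, rfl⟩ := (blockPos t).surjective w
  have hmem (k : Fin t) (u : Fin 4) : k = i ∧ u ∈ localPartner r ↔ k = j ∧ u ∈ localPartner s := by
    rw [← @mem_partner _ i k r u, h, mem_partner]
  obtain ⟨u, hu⟩ : (localPartner r).Nonempty := Finset.card_pos.1 (by rw [card_localPartner]; norm_num)
  obtain ⟨rfl, -⟩ := (hmem i u).1 ⟨rfl, hu⟩
  rw [localPartner_injective (a₁ := r) (a₂ := s) (Finset.ext fun u => by simpa using hmem i u)]

lemma not_mem_partner (v : Fin (4 * t)) : v ∉ (partner v).val := by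
  obtain ⟨⟨i, r⟩, rfl⟩ := (blockPos t).surjective v
  simp [not_mem_localPartner]

lemma partner_blockPos_eq (i : Fin t) {r p q : Fin 4} (h : localPartner r = {p, q}) :
    (partner (blockPos t (i, r))).val = {blockPos t (i, p), blockPos t (i, q)} := by
  ext v
  obtain ⟨⟨j, s⟩, rfl⟩ := (blockPos t).surjective v
  simp only [mem_partner, h, mem_insert, mem_singleton, EmbeddingLike.apply_eq_iff_eq,
    Prod.mk.injEq]
  tauto

lemma wedge1_eq (i : Fin t) : wedge1 i = graphTwoEdge partner (vc i) (vd i) := by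
  simp only [wedge1, graphTwoEdge, pr, vc_eq, vd_eq, va_eq, vb_eq]
  congr 2 <;> apply Subtype.ext <;> exact (partner_blockPos_eq i rfl).symm

lemma wedge2_eq (i : Fin t) : wedge2 i = graphTwoEdge partner (va i) (vb i) := by
  simp only [wedge2, graphTwoEdge, pr, vc_eq, vd_eq, va_eq, vb_eq]
  congr 2 <;> apply Subtype.ext <;> exact (partner_blockPos_eq i rfl).symm

lemma genC4FreePair_blockPos {p q : Fin 4} (h : GenC4FreePair (fun r s => s ∈ localPartner r) p q)
    (i : Fin t) :
    GenC4FreePair (fun u w => w ∈ (partner u).val) (blockPos t (i, p)) (blockPos t (i, q)) := by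
  obtain ⟨hpq, hopp, hfive⟩ := h
  refine ⟨by simpa using hpq, by simpa using hopp, fun l => ?_⟩
  obtain ⟨⟨j, s⟩, rfl⟩ := (blockPos t).surjective l
  simp only [mem_partner]
  rintro ⟨⟨rfl, hsp⟩, ⟨-, hsq⟩, ⟨-, hps⟩, ⟨-, hqs⟩⟩
  exact hfive s ⟨hsp, hsq, hps, hqs⟩

lemma genC4FreePair_wedge1 (i : Fin t) :
    GenC4FreePair (fun u w => w ∈ (partner u).val) (vc i) (vd i) := by
  rw [vc_eq, vd_eq]
  exact genC4FreePair_blockPos (by unfold GenC4FreePair; decide) i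

lemma genC4FreePair_wedge2 (i : Fin t) :
    GenC4FreePair (fun u w => w ∈ (partner u).val) (va i) (vb i) := by
  rw [va_eq, vb_eq]
  exact genC4FreePair_blockPos (by unfold GenC4FreePair; decide) i

lemma mem_E2K {f : TwoEdge (KEdges t) (Fin (4 * t))} :
    f ∈ E2K t ↔ ∃ i, f = wedge1 i ∨ f = wedge2 i := by
  simp [E2K]

lemma E2K_graph : ∀ f ∈ E2K t, ∃ x y, f = graphTwoEdge partner x y ∧
    GenC4FreePair (fun u w => w ∈ (partner u).val) x y := by
  intro f hf
  obtain ⟨i, rfl | rfl⟩ := mem_E2K.1 hf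
  · exact ⟨_, _, wedge1_eq i, genC4FreePair_wedge1 i⟩
  · exact ⟨_, _, wedge2_eq i, genC4FreePair_wedge2 i⟩

lemma E2K_columns_ne : ∀ f ∈ E2K t, ∀ g ∈ E2K t, f ≠ g →
    f.1.2 ≠ g.1.2 ∧ f.1.2 ≠ g.2.2 ∧ f.2.2 ≠ g.1.2 ∧ f.2.2 ≠ g.2.2 := by
  intro f hf g hg hfg
  obtain ⟨i, rfl | rfl⟩ := mem_E2K.1 hf <;> obtain ⟨j, rfl | rfl⟩ := mem_E2K.1 hg <;>
    obtain rfl | hij := eq_or_ne i j <;>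
    simp_all [wedge1, wedge2, va, vb, vc, vd, Fin.ext_iff] <;> omega

end Blocks

theorem K4t_within_block_admissible_general (t : ℕ) :
    Simple (IncK t) (E2K t) ∧ ¬ HasGenC4 (IncK t) (E2K t) :=
  ⟨simple_incidence not_mem_partner
      (fun f hf => (E2K_graph f hf).imp fun _ ⟨y, hxy, hne, _⟩ => ⟨y, hxy, hne⟩) E2K_columns_ne,
    not_hasGenC4_incidence partner_injective E2K_graph⟩

/-- for every `t ≥ 1`, the incidence graph of `K_{4t}` together with the
`2t` within-block 2-edges satisfies the simplicity condition and contains no generalized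
`C₄`-cycle. -/
theorem K4t_within_block_admissible (t : ℕ) (ht : 1 ≤ t) :
    Simple (IncK t) (E2K t) ∧ ¬ HasGenC4 (IncK t) (E2K t) :=
  K4t_within_block_admissible_general t
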